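/- Let P_(·) be an irreducible G-stochastic function defined on A with gcd(A) = 1, and let d̂ be the common period of all states. Then there exists a partition {G_0, …, G_{d̂−1}} of G such that for every word 𝐛 and all states i, j: if P_𝐛(i,j) > 0 and i ∈ G_h, then j ∈ G_l where l ≡ h + s(𝐛) (mod d̂). -/

import Mathlib

open MeasureTheory
open scoped BigOperators

/-- The matrix of a word `𝐚 = (a_1, …, a_n)` (encoded as a list `[a_1, …, a_n]`),
namely `P_𝐚 = P_(a_n) ⋯ P_(a_1)`, so that `wordK P l i j` is the `(i,j)` entry. -/
noncomputable def wordK {G : Type*} [Fintype G] [DecidableEq G]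
    (P : ℕ → G → G → ℝ) : List ℕ → G → G → ℝ
  | [] => fun i j => if i = j then 1 else 0
  | a :: l => fun i j => ∑ m, wordK P l i m * P a m j

/-- A word over the alphabet `A`: a nonempty finite tuple with entries in `A`. -/
def IsWord (A : Set ℕ) (l : List ℕ) : Prop := l ≠ [] ∧ ∀ a ∈ l, a ∈ A

/-- `i` communicates with `j` if `P_𝐚(i,j) > 0` for some word `𝐚`. -/
def Communicates {G : Type*} [Fintype G] [DecidableEq G]
    (A : Set ℕ) (P : ℕ → G → G → ℝ) (i j : G) : Prop :=
  ∃ l : List ℕ, IsWord A l ∧ 0 < wordK P l i j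

/-- `i` and `j` intercommunicate (every state intercommunicates with itself). -/
def Intercommunicates {G : Type*} [Fintype G] [DecidableEq G]
    (A : Set ℕ) (P : ℕ → G → G → ℝ) (i j : G) : Prop :=
  i = j ∨ (Communicates A P i j ∧ Communicates A P j i)

/-- An intercommunicating class: an equivalence class of the intercommunication relation. -/
def IsInterClass {G : Type*} [Fintype G] [DecidableEq G]
    (A : Set ℕ) (P : ℕ → G → G → ℝ) (C : Set G) : Prop :=
  ∃ i : G, C = {j | Intercommunicates A P i j}

/-- A set `C` is closed if whenever `i ∈ C` communicates with `j`, then `j ∈ C`. -/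
def IsClosedClass {G : Type*} [Fintype G] [DecidableEq G]
    (A : Set ℕ) (P : ℕ → G → G → ℝ) (C : Set G) : Prop :=
  ∀ i ∈ C, ∀ j : G, Communicates A P i j → j ∈ C

/-- `d` is the greatest common divisor of the set `S ⊆ ℕ`. -/
def IsGCDOfSet (S : Set ℕ) (d : ℕ) : Prop :=
  (∀ n ∈ S, d ∣ n) ∧ ∀ e : ℕ, (∀ n ∈ S, e ∣ n) → e ∣ d

/-- The set of depths `s(𝐚)` of words `𝐚` with `P_𝐚(i,i) > 0`. -/
def ReturnDepths {G : Type*} [Fintype G] [DecidableEq G]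
    (A : Set ℕ) (P : ℕ → G → G → ℝ) (i : G) : Set ℕ :=
  {s | ∃ l : List ℕ, IsWord A l ∧ 0 < wordK P l i i ∧ l.sum = s}

/-- `E` is measurable with respect to the coordinates `(x_m)_{m < n}`. -/
def PastMeasurable {G : Type*} [MeasurableSpace G] (n : ℤ) (E : Set (ℤ → G)) : Prop :=
  MeasurableSet[MeasurableSpace.comap
    (fun x : ℤ → G => fun m : {m : ℤ // m < n} => x m.1) MeasurableSpace.pi] E

/-- `μ` is compatible with the imitation kernel
`p(g | w_{-1}, w_{-2}, …) = ∑_{k ∈ A} θ_k P_(k)(w_{-k}, g)` (here `θ` vanishes off `A`). -/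
def Compatible {G : Type*} [MeasurableSpace G] (θ : ℕ → ℝ) (P : ℕ → G → G → ℝ)
    (μ : Measure (ℤ → G)) : Prop :=
  ∀ (n : ℤ) (g : G) (E : Set (ℤ → G)), PastMeasurable n E →
    (μ (E ∩ {x | x n = g})).toReal
      = ∫ x in E, (∑' k : ℕ, θ k * P k (x (n - (k : ℤ))) g) ∂μ

/-!
Fix a base state `i₀` and put `j` into class `h` when some word of depth `≡ h (mod d̂)` leads
from `i₀` to `j`. The class is well defined: if words `𝐥, 𝐦` both lead from `i₀` to `j` and `𝐭` leads
back from `j` to `i₀`, then `𝐭𝐥` and `𝐭𝐦` are returns to `i₀`, so `d̂` divides both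
`s(𝐭) + s(𝐥)` and `s(𝐭) + s(𝐦)`. Appending a word `𝐛` with `P_𝐛(i,j) > 0` to a word reaching `i`
gives a word reaching `j`, which shifts the class by `s(𝐛)`.
-/

section Words

variable {G : Type*} [Fintype G] [DecidableEq G] {A : Set ℕ} {P : ℕ → G → G → ℝ}

theorem IsWord.append {l m : List ℕ} (hl : IsWord A l) (hm : IsWord A m) :
    IsWord A (l ++ m) :=
  ⟨by simp [hl.1], fun a ha => (List.mem_append.1 ha).elim (hl.2 a) (hm.2 a)⟩

theorem wordK_nonneg (hPnn : ∀ k ∈ A, ∀ i j : G, 0 ≤ P k i j) {l : List ℕ}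
    (hl : ∀ a ∈ l, a ∈ A) (i j : G) : 0 ≤ wordK P l i j := by
  induction l generalizing j with
  | nil => simp only [wordK]; split <;> norm_num
  | cons a l ih =>
    exact Finset.sum_nonneg fun m _ =>
      mul_nonneg (ih (fun b hb => hl b (List.mem_cons_of_mem _ hb)) m)
        (hPnn a (hl a List.mem_cons_self) m j)

theorem wordK_append (P : ℕ → G → G → ℝ) (l m : List ℕ) (i j : G) :
    wordK P (l ++ m) i j = ∑ k, wordK P m i k * wordK P l k j := by
  induction l generalizing j with
  | nil => simp [wordK]
  | cons a l ih =>
    simp only [List.cons_append, wordK, ih, Finset.sum_mul, Finset.mul_sum, mul_assoc]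
    exact Finset.sum_comm

theorem wordK_append_pos (hPnn : ∀ k ∈ A, ∀ i j : G, 0 ≤ P k i j) {l m : List ℕ}
    (hl : IsWord A l) (hm : IsWord A m) {i j k : G}
    (hik : 0 < wordK P m i k) (hkj : 0 < wordK P l k j) : 0 < wordK P (l ++ m) i j := by
  rw [wordK_append]
  exact Finset.sum_pos'
    (fun t _ => mul_nonneg (wordK_nonneg hPnn hm.2 i t) (wordK_nonneg hPnn hl.2 t j))
    ⟨k, Finset.mem_univ k, mul_pos hik hkj⟩

theorem sum_modEq_of_wordK_pos (hPnn : ∀ k ∈ A, ∀ i j : G, 0 ≤ P k i j) {d : ℕ} {i₀ x : G}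
    (hret : ∀ n ∈ ReturnDepths A P i₀, d ∣ n) (hback : Communicates A P x i₀)
    {l m : List ℕ} (hl : IsWord A l) (hm : IsWord A m)
    (hlx : 0 < wordK P l i₀ x) (hmx : 0 < wordK P m i₀ x) : l.sum ≡ m.sum [MOD d] := by
  obtain ⟨t, ht, htx⟩ := hback
  have hreturn : ∀ w, IsWord A w → 0 < wordK P w i₀ x → t.sum + w.sum ≡ 0 [MOD d] :=
    fun w hw hwx => Nat.modEq_zero_iff_dvd.2 <| by
      simpa only [List.sum_append] using
        hret _ ⟨t ++ w, ht.append hw, wordK_append_pos hPnn ht hw hwx htx, rfl⟩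
  exact Nat.ModEq.add_left_cancel' t.sum ((hreturn l hl hlx).trans (hreturn m hm hmx).symm)

variable (A P) in
def cyclicClass (d : ℕ) (i₀ : G) (r : ℕ) : Set G :=
  {j | ∃ l : List ℕ, IsWord A l ∧ 0 < wordK P l i₀ j ∧ l.sum % d = r}

theorem mem_cyclicClass_of_wordK_pos (hPnn : ∀ k ∈ A, ∀ i j : G, 0 ≤ P k i j) {d r : ℕ}
    {i₀ i j : G} (hi : i ∈ cyclicClass A P d i₀ r) {l : List ℕ} (hl : IsWord A l)
    (hij : 0 < wordK P l i j) : j ∈ cyclicClass A P d i₀ ((r + l.sum) % d) := by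
  obtain ⟨m, hm, hmi, rfl⟩ := hi
  refine ⟨l ++ m, hl.append hm, wordK_append_pos hPnn hl hm hmi hij, ?_⟩
  rw [List.sum_append, Nat.mod_add_mod, Nat.add_comm]

end Words

theorem stmt_7_general {G : Type*} [Fintype G] [DecidableEq G] [Nonempty G]
    (A : Set ℕ)
    (P : ℕ → G → G → ℝ)
    (hPnn : ∀ k ∈ A, ∀ i j : G, 0 ≤ P k i j)
    (hirr : ∀ i j : G, Communicates A P i j)
    (dhat : ℕ) (hdhat : 0 < dhat)
    (hper : ∀ i : G, IsGCDOfSet (ReturnDepths A P i) dhat) :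
    ∃ Gp : Fin dhat → Set G,
      (∀ x : G, ∃! h : Fin dhat, x ∈ Gp h) ∧
      (∀ l : List ℕ, IsWord A l → ∀ i j : G, 0 < wordK P l i j →
        ∀ h : Fin dhat, i ∈ Gp h →
          j ∈ Gp ⟨(h.1 + l.sum) % dhat, Nat.mod_lt _ hdhat⟩) := by
  obtain ⟨i₀⟩ := ‹Nonempty G›
  refine ⟨fun h => cyclicClass A P dhat i₀ h, fun x => ?_,
    fun l hl i j hij h hi => mem_cyclicClass_of_wordK_pos hPnn hi hl hij⟩
  obtain ⟨l, hl, hlx⟩ := hirr i₀ x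
  refine ⟨⟨l.sum % dhat, Nat.mod_lt _ hdhat⟩, ⟨l, hl, hlx, rfl⟩, ?_⟩
  rintro h ⟨m, hm, hmx, hmh⟩
  exact Fin.ext <| hmh.symm.trans
    (sum_modEq_of_wordK_pos hPnn (hper i₀).1 (hirr x i₀) hm hl hmx hlx)

/-- the cyclic decomposition `{G_0, …, G_{d̂−1}}`: if
`P_𝐛(i,j) > 0` and `i ∈ G_h` then `j ∈ G_{h + s(𝐛) mod d̂}`. -/
theorem stmt_7 {G : Type*} [Fintype G] [DecidableEq G] [Nonempty G]
    (A : Set ℕ) (hA : A.Nonempty) (hApos : ∀ k ∈ A, 0 < k)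
    (P : ℕ → G → G → ℝ)
    (hPnn : ∀ k ∈ A, ∀ i j : G, 0 ≤ P k i j)
    (hProw : ∀ k ∈ A, ∀ i : G, ∑ j, P k i j = 1)
    (hirr : ∀ i j : G, Communicates A P i j)
    (hgcdA : IsGCDOfSet A 1)
    (dhat : ℕ) (hdhat : 0 < dhat)
    (hper : ∀ i : G, IsGCDOfSet (ReturnDepths A P i) dhat) :
    ∃ Gp : Fin dhat → Set G,
      (∀ x : G, ∃! h : Fin dhat, x ∈ Gp h) ∧
      (∀ l : List ℕ, IsWord A l → ∀ i j : G, 0 < wordK P l i j →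
        ∀ h : Fin dhat, i ∈ Gp h →
          j ∈ Gp ⟨(h.1 + l.sum) % dhat, Nat.mod_lt _ hdhat⟩) :=
  stmt_7_general A P hPnn hirr dhat hdhat hper
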